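/- arXiv:2108.00734 — 4 statements merged into one kernel-verified Lean document; each statement's English description precedes it below -/
import Mathlib

section
/- Let H : ℂ³ → ℂ³ be the homogeneous cubic map H(x,y,z) = (yz(y-z), x(x²-z²), xz(y-z)). Then the set of directions [x:y:z] ∈ ℙ²(ℂ) satisfying H(x,y,z) = λ·(x,y,z) for some λ ∈ ℂ is exactly {[0:0:1], [0:1:1], [1:1:1], [-1:1:1], [0:1:0]}. -/
/-- The characteristic directions of the homogeneous cubic map
`H(x,y,z) = (yz(y-z), x(x²-z²), xz(y-z))` are exactly
`[0:0:1], [0:1:1], [1:1:1], [-1:1:1], [0:1:0]`. -/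
theorem stmt_0 (x y z : ℂ) (hv : (x, y, z) ≠ ((0 : ℂ), (0 : ℂ), (0 : ℂ))) :
    (∃ lam : ℂ,
      (y * z * (y - z), x * (x ^ 2 - z ^ 2), x * z * (y - z)) = (lam * x, lam * y, lam * z)) ↔
    ∃ t : ℂ, t ≠ 0 ∧
      ((x, y, z) = ((0 : ℂ), (0 : ℂ), t) ∨ (x, y, z) = ((0 : ℂ), t, t) ∨
        (x, y, z) = (t, t, t) ∨ (x, y, z) = (-t, t, t) ∨ (x, y, z) = ((0 : ℂ), t, (0 : ℂ))) := by
  simp only [Prod.mk.injEq, ne_eq] at *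
  constructor
  · rintro ⟨lam, h1, h2, h3⟩
    by_cases hx : x = 0
    · subst hx
      have hly : lam * y = 0 := by rw [← h2]; ring
      have hlz : lam * z = 0 := h3.symm.trans (by ring)
      by_cases hl : lam = 0
      · subst hl
        simp only [zero_mul] at h1
        rcases mul_eq_zero.mp h1 with h | hyz
        · rcases mul_eq_zero.mp h with hy | hz
          · subst hy
            have hz : z ≠ 0 := fun hz => hv ⟨rfl, rfl, hz⟩
            exact ⟨z, hz, Or.inl ⟨rfl, rfl, rfl⟩⟩
          · subst hz
            have hy : y ≠ 0 := fun hy => hv ⟨rfl, hy, rfl⟩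
            exact ⟨y, hy, Or.inr (Or.inr (Or.inr (Or.inr ⟨rfl, rfl, rfl⟩)))⟩
        · have hyz' : y = z := by linear_combination hyz
          subst hyz'
          have hy : y ≠ 0 := fun hy => hv ⟨rfl, hy, hy⟩
          exact ⟨y, hy, Or.inr (Or.inl ⟨rfl, rfl, rfl⟩)⟩
      · have hy : y = 0 := by rcases mul_eq_zero.mp hly with h | h; exact absurd h hl; exact h
        have hz : z = 0 := by rcases mul_eq_zero.mp hlz with h | h; exact absurd h hl; exact h
        exact absurd ⟨rfl, hy, hz⟩ hv
    · have hz : z ≠ 0 := by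
        intro hz
        subst hz
        have hl : lam = 0 := by
          rcases mul_eq_zero.mp (show lam * x = 0 by rw [← h1]; ring) with h | h
          · exact h
          · exact absurd h hx
        subst hl
        have : x * (x ^ 2 - 0 ^ 2) = 0 := by rw [h2]; ring
        have hx3 : x ^ 3 = 0 := by linear_combination this
        exact hx (pow_eq_zero_iff (by norm_num) |>.mp hx3)
      have hlam : lam = x * (y - z) := by
        have := mul_left_cancel₀ hz (show z * (x * (y - z)) = z * lam by
          linear_combination h3)
        exact this.symm
      subst hlam
      have key : (y - z) * (y * z - x ^ 2) = 0 := by linear_combination h1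
      rcases mul_eq_zero.mp key with hyz | hx2
      · have hyz' : y = z := by linear_combination hyz
        subst hyz'
        have h2' : x * ((x - y) * (x + y)) = 0 := by linear_combination h2
        rcases mul_eq_zero.mp h2' with h | h
        · exact absurd h hx
        · rcases mul_eq_zero.mp h with h | h
          · have : x = y := by linear_combination h
            exact ⟨y, hz, Or.inr (Or.inr (Or.inl ⟨this, rfl, rfl⟩))⟩
          · have : x = -y := by linear_combination h
            exact ⟨y, hz, Or.inr (Or.inr (Or.inr (Or.inl ⟨this, rfl, rfl⟩)))⟩
      · -- y*z = x^2, combined with h2 forces (y-z)^2 = 0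
        have hx2' : y * z = x ^ 2 := by linear_combination hx2
        have h2' : x * ((y - z) ^ 2) = 0 := by linear_combination -h2 - x * hx2
        rcases mul_eq_zero.mp h2' with h | h
        · exact absurd h hx
        · have hyz' : y = z := by
            have := pow_eq_zero_iff (n := 2) (by norm_num) |>.mp h
            linear_combination this
          subst hyz'
          have h2'' : x * ((x - y) * (x + y)) = 0 := by linear_combination h2
          rcases mul_eq_zero.mp h2'' with h' | h'
          · exact absurd h' hx
          · rcases mul_eq_zero.mp h' with h' | h'
            · exact ⟨y, hz, Or.inr (Or.inr (Or.inl ⟨by linear_combination h', rfl, rfl⟩))⟩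
            · exact ⟨y, hz, Or.inr (Or.inr (Or.inr (Or.inl ⟨by linear_combination h', rfl, rfl⟩)))⟩
  · rintro ⟨t, ht, ⟨hx, hy, hz⟩ | ⟨hx, hy, hz⟩ | ⟨hx, hy, hz⟩ | ⟨hx, hy, hz⟩ | ⟨hx, hy, hz⟩⟩ <;>
      subst hx <;> subst hy <;> subst hz <;> exact ⟨0, by ring, by ring, by ring⟩
end

section
/- The local intersection multiplicity at the origin of the plane curves {z - z² - x⁴ + x²z² = 0} and {xz(1 - z - x² + z²) = 0} in ℂ² equals 5. -/
/-!
The unit `1 - z - x² + z²` can be cancelled from the second generator, after which the ideal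
becomes `(z - x⁴, x⁵)`. Modulo `z - xᵐ` (with `m ≠ 0`) every power series is congruent to
`c + x g` (split off the constant term, then replace `z` by `xᵐ`); iterating `n` times shows that
`X ↦ x` maps `K[X]` onto `K⟦x, z⟧ ⧸ (z - xᵐ, xⁿ)`. Its kernel is `(Xⁿ)`: substituting
`x ↦ t, z ↦ tᵐ` sends the ideal into `(tⁿ) ⊆ K⟦t⟧`. Hence the quotient is `K[X] ⧸ (Xⁿ)`, of
dimension `n`.
-/

open scoped Polynomial

namespace MvPowerSeries

variable {σ R : Type*} [CommRing R]

def eraseVars (S : Finset σ) (f : MvPowerSeries σ R) : MvPowerSeries σ R :=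
  fun m => if ∀ s ∈ S, m s = 0 then coeff m f else 0

theorem coeff_eraseVars (S : Finset σ) (f : MvPowerSeries σ R) (m : σ →₀ ℕ) :
    coeff m (eraseVars S f) = if ∀ s ∈ S, m s = 0 then coeff m f else 0 :=
  rfl

theorem X_dvd_eraseVars_sub_eraseVars_insert [DecidableEq σ] (s : σ) (S : Finset σ)
    (f : MvPowerSeries σ R) : X s ∣ eraseVars S f - eraseVars (insert s S) f :=
  X_dvd_iff.mpr fun m hm => by simp [coeff_eraseVars, hm]

theorem sub_C_constantCoeff_mem_span_X [Finite σ] (f : MvPowerSeries σ R) :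
    f - C (constantCoeff f) ∈ Ideal.span (Set.range X) := by
  classical
  have := Fintype.ofFinite σ
  have h (S : Finset σ) : f - eraseVars S f ∈ Ideal.span (Set.range X) := by
    induction S using Finset.induction_on with
    | empty =>
      have : eraseVars ∅ f = f := by ext m; simp [coeff_eraseVars]
      simp [this]
    | insert s S _ ih =>
      rw [← sub_add_sub_cancel f (eraseVars S f)]
      exact add_mem ih <| Ideal.span_mono (Set.singleton_subset_iff.mpr (Set.mem_range_self s))
        (Ideal.mem_span_singleton.mpr (X_dvd_eraseVars_sub_eraseVars_insert s S f))
  convert h Finset.univ using 2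
  ext m
  have : (∀ s ∈ Finset.univ, m s = 0) ↔ m = 0 := by simp [Finsupp.ext_iff]
  simp only [coeff_eraseVars, coeff_C, this]
  split_ifs with hm <;> simp [hm]

end MvPowerSeries

theorem exists_sub_aeval_mem {K A : Type*} [CommRing K] [CommRing A] [Algebra K A]
    {J : Ideal A} {x : A} {n : ℕ} (hn : x ^ n ∈ J)
    (h : ∀ f : A, ∃ c : K, ∃ g : A, f - (algebraMap K A c + x * g) ∈ J) (f : A) :
    ∃ p : K[X], f - Polynomial.aeval x p ∈ J := by
  suffices ∀ k, ∃ p : K[X], ∃ g : A, f - (Polynomial.aeval x p + x ^ k * g) ∈ J by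
    obtain ⟨p, g, hpg⟩ := this n
    refine ⟨p, ?_⟩
    convert add_mem hpg (J.mul_mem_right g hn) using 1
    ring
  intro k
  induction k with
  | zero => exact ⟨0, f, by simp⟩
  | succ k ih =>
    obtain ⟨p, g, hpg⟩ := ih
    obtain ⟨c, g', hcg⟩ := h g
    refine ⟨p + Polynomial.C c * Polynomial.X ^ k, g', ?_⟩
    convert add_mem hpg (J.mul_mem_left (x ^ k) hcg) using 1
    simp only [map_add, map_mul, Polynomial.aeval_C, Polynomial.aeval_X_pow]
    ring

namespace MvPowerSeries

section

variable {R : Type*} [CommRing R] {m : ℕ}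

theorem exists_sub_C_add_X_zero_mul_mem (hm : m ≠ 0) {J : Ideal (MvPowerSeries (Fin 2) R)}
    (hJ : X 1 - X 0 ^ m ∈ J) (f : MvPowerSeries (Fin 2) R) :
    ∃ c : R, ∃ g : MvPowerSeries (Fin 2) R, f - (algebraMap R _ c + X 0 * g) ∈ J := by
  have hX : Ideal.span (Set.range (X : Fin 2 → MvPowerSeries (Fin 2) R)) ≤
      Ideal.span {X 0} ⊔ J := by
    rw [Ideal.span_le]
    rintro _ ⟨s, rfl⟩
    fin_cases s
    · exact Ideal.mem_sup_left (Ideal.mem_span_singleton_self _)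
    · refine Submodule.mem_sup.mpr ⟨X 0 ^ m, ?_, X 1 - X 0 ^ m, hJ, by simp⟩
      exact Ideal.mem_span_singleton.mpr (dvd_pow_self _ hm)
  obtain ⟨y, hy, j, hj, hyj⟩ := Submodule.mem_sup.mp (hX (sub_C_constantCoeff_mem_span_X f))
  obtain ⟨g, rfl⟩ := Ideal.mem_span_singleton'.mp hy
  refine ⟨constantCoeff f, g, ?_⟩
  convert hj using 1
  rw [← c_eq_algebraMap]
  linear_combination -hyj

theorem hasSubst_X_X_pow (hm : m ≠ 0) :
    HasSubst (![PowerSeries.X, PowerSeries.X ^ m] : Fin 2 → PowerSeries R) :=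
  hasSubst_of_constantCoeff_zero fun s => by fin_cases s <;> simp [PowerSeries.X, hm]

theorem aeval_X_zero_mem_span_iff (hm : m ≠ 0) (n : ℕ) (p : R[X]) :
    Polynomial.aeval (X 0) p ∈ Ideal.span {X 1 - X 0 ^ m, (X 0 ^ n : MvPowerSeries (Fin 2) R)} ↔
      Polynomial.X ^ n ∣ p := by
  constructor
  · intro hp
    let ρ : MvPowerSeries (Fin 2) R →ₐ[R] PowerSeries R := substAlgHom (hasSubst_X_X_pow hm)
    have hρX (s : Fin 2) : ρ (X s) = ![PowerSeries.X, PowerSeries.X ^ m] s :=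
      substAlgHom_X _ s
    have hρ : Ideal.map ρ (Ideal.span {X 1 - X 0 ^ m, X 0 ^ n}) ≤
        Ideal.span {PowerSeries.X ^ n} := by
      rw [Ideal.map_span, Ideal.span_le]
      rintro _ ⟨q, hq, rfl⟩
      rcases hq with rfl | rfl
      · simp [map_sub, map_pow, hρX]
      · simp [map_pow, hρX]
    have hρp : ρ (Polynomial.aeval (X 0) p) = p := by
      rw [← Polynomial.aeval_algHom_apply, hρX]
      exact Polynomial.eval₂_C_X_eq_coe
    have := hρ (hρp ▸ Ideal.mem_map_of_mem ρ hp)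
    rw [Ideal.mem_span_singleton, PowerSeries.X_pow_dvd_iff] at this
    exact Polynomial.X_pow_dvd_iff.mpr fun d hd => by simpa using this d hd
  · rintro ⟨q, rfl⟩
    rw [map_mul, map_pow, Polynomial.aeval_X]
    exact Ideal.mul_mem_right _ _ (Ideal.subset_span (by simp))

theorem span_eq_span_X_sub_X_pow_X_pow :
    Ideal.span
      {(X 1 - X 1 ^ 2 - X 0 ^ 4 + X 0 ^ 2 * X 1 ^ 2 : MvPowerSeries (Fin 2) R),
       X 0 * X 1 * (1 - X 1 - X 0 ^ 2 + X 1 ^ 2)} =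
      Ideal.span {X 1 - X 0 ^ 4, X 0 ^ 5} := by
  have hu : IsUnit (1 - X 1 - X 0 ^ 2 + X 1 ^ 2 : MvPowerSeries (Fin 2) R) := by
    simp [isUnit_iff_constantCoeff]
  have hv : IsUnit (1 - X 1 : MvPowerSeries (Fin 2) R) := by
    simp [isUnit_iff_constantCoeff]
  apply le_antisymm
  · set I := Ideal.span {X 1 - X 0 ^ 4, (X 0 ^ 5 : MvPowerSeries (Fin 2) R)}
    have hz : X 1 - X 0 ^ 4 ∈ I := Ideal.subset_span (by simp)
    have hxz : X 0 * X 1 ∈ I := Ideal.mem_span_pair.mpr ⟨X 0, 1, by ring⟩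
    have hz2 : X 1 ^ 2 ∈ I := Ideal.mem_span_pair.mpr ⟨X 1 + X 0 ^ 4, X 0 ^ 3, by ring⟩
    simp only [Ideal.span_le, Set.insert_subset_iff, Set.singleton_subset_iff, SetLike.mem_coe]
    constructor
    · convert add_mem hz (I.mul_mem_left (X 0 ^ 2 - 1) hz2) using 1
      ring
    · exact I.mul_mem_right _ hxz
  · set I := Ideal.span
      {(X 1 - X 1 ^ 2 - X 0 ^ 4 + X 0 ^ 2 * X 1 ^ 2 : MvPowerSeries (Fin 2) R),
       X 0 * X 1 * (1 - X 1 - X 0 ^ 2 + X 1 ^ 2)}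
    have hφ : X 1 - X 1 ^ 2 - X 0 ^ 4 + X 0 ^ 2 * X 1 ^ 2 ∈ I := Ideal.subset_span (by simp)
    have hxz : X 0 * X 1 ∈ I := (I.mul_unit_mem_iff_mem hu).mp (Ideal.subset_span (by simp))
    have hz2 : X 1 ^ 2 ∈ I := (I.mul_unit_mem_iff_mem hv).mp <| by
      convert add_mem (I.mul_mem_left (X 1) hφ) (I.mul_mem_left (X 0 ^ 3 - X 0 * X 1 ^ 2) hxz)
        using 1
      ring
    have hz : X 1 - X 0 ^ 4 ∈ I := by
      convert add_mem hφ (I.mul_mem_left (1 - X 0 ^ 2) hz2) using 1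
      ring
    simp only [Ideal.span_le, Set.insert_subset_iff, Set.singleton_subset_iff, SetLike.mem_coe]
    refine ⟨hz, ?_⟩
    convert sub_mem hxz (I.mul_mem_left (X 0) hz) using 1
    ring

end

theorem finrank_quotient_span_X_sub_X_pow_X_pow {K : Type*} [Field K] {m : ℕ} (hm : m ≠ 0)
    (n : ℕ) :
    Module.finrank K (MvPowerSeries (Fin 2) K ⧸
      Ideal.span {X 1 - X 0 ^ m, (X 0 ^ n : MvPowerSeries (Fin 2) K)}) = n := by
  set J := Ideal.span {X 1 - X 0 ^ m, (X 0 ^ n : MvPowerSeries (Fin 2) K)}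
  let φ := (Ideal.Quotient.mkₐ K J).comp (Polynomial.aeval (X 0))
  have hφ : Function.Surjective φ := by
    intro q
    obtain ⟨f, rfl⟩ := Ideal.Quotient.mk_surjective q
    obtain ⟨p, hp⟩ := exists_sub_aeval_mem (Ideal.subset_span (by simp) : X 0 ^ n ∈ J)
      (exists_sub_C_add_X_zero_mul_mem hm (Ideal.subset_span (by simp))) f
    exact ⟨p, (Ideal.Quotient.eq.mpr hp).symm⟩
  have hker : RingHom.ker φ = Ideal.span {Polynomial.X ^ n} := by
    ext p
    simp [φ, RingHom.mem_ker, Ideal.Quotient.eq_zero_iff_mem, Ideal.mem_span_singleton, J,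
      aeval_X_zero_mem_span_iff hm]
  rw [← (Ideal.quotientKerAlgEquivOfSurjective hφ).toLinearEquiv.finrank_eq,
    (Ideal.quotientEquivAlgOfEq K hker).toLinearEquiv.finrank_eq,
    finrank_quotient_span_eq_natDegree, Polynomial.natDegree_X_pow]

end MvPowerSeries

open MvPowerSeries in
/-- The local intersection multiplicity at the origin of
`{z - z² - x⁴ + x²z² = 0}` and `{xz(1 - z - x² + z²) = 0}` equals `5`,
where `X 0` plays the role of `x` and `X 1` the role of `z`. -/
theorem stmt_2 :
    Module.finrank ℂ
      (MvPowerSeries (Fin 2) ℂ ⧸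
        Ideal.span
          {(X 1 - X 1 ^ 2 - X 0 ^ 4 + X 0 ^ 2 * X 1 ^ 2 : MvPowerSeries (Fin 2) ℂ),
           (X 0 * X 1 * (1 - X 1 - X 0 ^ 2 + X 1 ^ 2) : MvPowerSeries (Fin 2) ℂ)}) = 5 := by
  rw [span_eq_span_X_sub_X_pow_X_pow]
  exact finrank_quotient_span_X_sub_X_pow_X_pow (by norm_num) 5
end

section
/- Let f be the germ f(x,y,z) = (x + yz(y-z) + P, y + x(x²-z²) + Q, z + xz(y-z) + R) with P,Q,R of order ≥ 4. In the chart where the blow-up of the origin is π(x,y,z) = (xz, yz, z), the lift f₁ = π⁻¹∘f∘π satisfies, modulo terms of order ≥ 4 in z: x∘f₁ = x + z²(-y + x² + y² - x²y) + O(z³), y∘f₁ = y + z²·x·(-1 + y + x² - y²) + O(z³), and z∘f₁ = z + z³x(-1+y) + O(z⁴). -/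
/-!
On the chart the lift is `f₁ = (X / Z, Y / Z, Z)` with `(X, Y, Z) = f ∘ π`. The third component
is read off directly: `Z = z + x z³ (y - 1) + O(z⁴)`, since `R ∘ π = O(z⁴)`. In particular
`Z ~ z`, so dividing by `Z` costs exactly one power of `z`, and for the first two components it
suffices that `X - A Z = O(z⁴)` for the claimed expansion `A`, which is a polynomial identity up
to the remainders `P ∘ π`, `A · (R ∘ π)` and a multiple of `z⁵`.
-/

open Asymptotics Filter Topology

theorem Asymptotics.IsBigO.comp_smul_pow {𝕜 E F : Type*} [NontriviallyNormedField 𝕜]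
    [NormedAddCommGroup E] [NormedSpace 𝕜 E] [NormedAddCommGroup F] {T : E → F} {n : ℕ}
    (hT : T =O[𝓝 0] fun w => ‖w‖ ^ n) (v : E) :
    (fun z : 𝕜 => T (z • v)) =O[𝓝 0] fun z => z ^ n := by
  have hline : Tendsto (fun z : 𝕜 => z • v) (𝓝 0) (𝓝 0) := by
    simpa using (tendsto_id (x := 𝓝 (0 : 𝕜))).smul_const v
  refine (hT.comp_tendsto hline).trans (isBigO_of_le' (c := ‖v‖ ^ n) _ fun z => ?_)
  simp [norm_smul, mul_pow, mul_comm]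

theorem Asymptotics.IsBigO.comp_blowupChart {T : ℂ × ℂ × ℂ → ℂ} {n : ℕ}
    (hT : T =O[𝓝 0] fun w => ‖w‖ ^ n) (x y : ℂ) :
    (fun z : ℂ => T (x * z, y * z, z)) =O[𝓝 0] fun z => z ^ n := by
  simpa [mul_comm] using hT.comp_smul_pow (𝕜 := ℂ) (x, y, 1)

theorem Asymptotics.IsEquivalent.isBigO_of_isBigO_mul {α 𝕜 : Type*} [NormedField 𝕜]
    {l : Filter α} {D g F h : α → 𝕜} (hD : D ~[l] g) (hg : ∀ᶠ z in l, g z ≠ 0)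
    (hF : (fun z => F z * D z) =O[l] fun z => g z * h z) : F =O[l] h := by
  have hD0 : ∀ᶠ z in l, D z ≠ 0 := by
    filter_upwards [hD.symm.isBigO.eq_zero_imp, hg] with z himp hgz hDz using hgz (himp hDz)
  refine (hF.mul hD.inv.isBigO).congr' ?_ ?_
  · filter_upwards [hD0] with z hz
    simp [hz]
  · filter_upwards [hg] with z hz
    rw [Pi.inv_apply]
    field_simp

theorem Filter.Tendsto.isBigO_mul {α 𝕜 : Type*} [NormedField 𝕜] {l : Filter α}
    {A T g : α → 𝕜} {a : 𝕜} (hA : Tendsto A l (𝓝 a)) (hT : T =O[l] g) :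
    (fun z => A z * T z) =O[l] g :=
  ((hA.isBigO_one 𝕜).mul hT).congr_right fun _ => one_mul _

open Asymptotics Filter Topology in
/-- Expansion of the lift `f₁` of `f(x,y,z) = (x + yz(y-z) + P, y + x(x²-z²) + Q,
z + xz(y-z) + R)` (with `P,Q,R` of order `≥ 4`) in the chart
`π(x,y,z) = (xz, yz, z)` of the blow-up of the origin. -/
theorem stmt_7 (P Q R : ℂ × ℂ × ℂ → ℂ)
    (hP : P =O[nhds 0] fun w : ℂ × ℂ × ℂ => ‖w‖ ^ 4)
    (hQ : Q =O[nhds 0] fun w : ℂ × ℂ × ℂ => ‖w‖ ^ 4)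
    (hR : R =O[nhds 0] fun w : ℂ × ℂ × ℂ => ‖w‖ ^ 4)
    (f1x f1y f1z : ℂ × ℂ × ℂ → ℂ) (x y : ℂ)
    (hlift : ∀ᶠ z in 𝓝[≠] (0 : ℂ),
      (f1x (x, y, z) * f1z (x, y, z), f1y (x, y, z) * f1z (x, y, z), f1z (x, y, z)) =
        (x * z + (y * z) * z * (y * z - z) + P (x * z, y * z, z),
         y * z + (x * z) * ((x * z) ^ 2 - z ^ 2) + Q (x * z, y * z, z),
         z + (x * z) * z * (y * z - z) + R (x * z, y * z, z))) :
    ((fun z : ℂ => f1x (x, y, z) - (x + z ^ 2 * (-y + x ^ 2 + y ^ 2 - x ^ 2 * y)))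
        =O[𝓝[≠] (0 : ℂ)] fun z => z ^ 3) ∧
    ((fun z : ℂ => f1y (x, y, z) - (y + z ^ 2 * x * (-1 + y + x ^ 2 - y ^ 2)))
        =O[𝓝[≠] (0 : ℂ)] fun z => z ^ 3) ∧
    ((fun z : ℂ => f1z (x, y, z) - (z + z ^ 3 * x * (-1 + y)))
        =O[𝓝[≠] (0 : ℂ)] fun z => z ^ 4) := by
  set l := 𝓝[≠] (0 : ℂ)
  have hl : l ≤ 𝓝 0 := nhdsWithin_le_nhds
  have hPz := (hP.comp_blowupChart x y).mono hl
  have hQz := (hQ.comp_blowupChart x y).mono hl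
  have hRz := (hR.comp_blowupChart x y).mono hl
  simp only [Prod.mk.injEq, eventually_and] at hlift
  obtain ⟨h1, h2, h3⟩ := hlift
  have hZ : (fun z : ℂ => f1z (x, y, z) - (z + z ^ 3 * x * (-1 + y))) =O[l] fun z => z ^ 4 :=
    hRz.congr' (h3.mono fun z h => by beta_reduce; rw [h]; ring) EventuallyEq.rfl
  have hZequiv : (fun z : ℂ => f1z (x, y, z)) ~[l] fun z => z := by
    have h4 := (isLittleO_pow_id (𝕜 := ℂ) (n := 4) (by norm_num)).mono hl
    have h3 := ((isLittleO_pow_id (𝕜 := ℂ) (n := 3) (by norm_num)).const_mul_left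
      (x * (-1 + y))).mono hl
    exact ((hZ.trans_isLittleO h4).add h3).congr_left fun z => by simp only [Pi.sub_apply]; ring
  have hcomponent : ∀ (F A S : ℂ → ℂ) (c : ℂ), Continuous A → S =O[l] (· ^ 4) →
      (∀ᶠ z in l, (F z - A z) * f1z (x, y, z) = S z - A z * R (x * z, y * z, z) + c * z ^ 5) →
      (fun z => F z - A z) =O[l] fun z => z ^ 3 := by
    intro F A S c hA hS hF
    have hAR := ((hA.tendsto 0).mono_left hl).isBigO_mul hRz
    have hz5 :=
      ((isLittleO_pow_pow (m := 4) (n := 5) (by norm_num)).isBigO.const_mul_left c).mono hl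
    refine hZequiv.isBigO_of_isBigO_mul self_mem_nhdsWithin
      (((hS.sub hAR).add hz5).congr' (hF.mono fun z hz => hz.symm) ?_)
    exact Eventually.of_forall fun z => by ring
  -- the constants `c` are the `z⁵`-coefficients of the numerators `(X - A Z)(z)`
  refine ⟨hcomponent _ _ _ (x * (1 - y) ^ 2 * (x ^ 2 - y)) (by fun_prop) hPz ?_,
    hcomponent _ _ _ (x ^ 2 * (-1 + 2 * y - 2 * y ^ 2 + y ^ 3) + x ^ 4 * (1 - y)) (by fun_prop)
      hQz ?_, hZ⟩
  · filter_upwards [h1, h3] with z h1 h3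
    rw [sub_mul, h1, h3]
    ring
  · filter_upwards [h2, h3] with z h2 h3
    rw [sub_mul, h2, h3]
    ring
end

section
/- The rational self-map of ℙ²(ℂ) defined by H([x:y:z]) = [yz(y-z) : x(x²-z²) : xz(y-z)] has no holomorphic fixed point: at every point [x:y:z] where all three coordinates of H are not simultaneously zero, H([x:y:z]) ≠ [x:y:z]; equivalently, every solution of the fixed-point equations (H being proportional to the identity) is an indeterminacy point, i.e. satisfies yz(y-z) = x(x²-z²) = xz(y-z) = 0. -/
/-- Ivashkovich's example: the rational map
`H([x:y:z]) = [yz(y-z) : x(x²-z²) : xz(y-z)]` of `ℙ²(ℂ)` has no holomorphic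
fixed point: every projective fixed point has multiplier `λ = 0`, i.e. is an
indeterminacy point. -/
theorem stmt_18 (x y z lam : ℂ) (hv : (x, y, z) ≠ ((0 : ℂ), (0 : ℂ), (0 : ℂ)))
    (hfix : y * z * (y - z) = lam * x ∧ x * (x ^ 2 - z ^ 2) = lam * y ∧
      x * z * (y - z) = lam * z) :
    lam = 0 ∧ y * z * (y - z) = 0 ∧ x * (x ^ 2 - z ^ 2) = 0 ∧
      x * z * (y - z) = 0 := by
  obtain ⟨h1, h2, h3⟩ := hfix
  by_cases hz : z = 0
  · subst hz
    have hl : lam = 0 := by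
      by_contra hl
      have hx0 : lam * x = 0 := by linear_combination -h1
      have hx : x = 0 := by
        rcases mul_eq_zero.mp hx0 with h | h
        · exact absurd h hl
        · exact h
      subst hx
      have hy0 : lam * y = 0 := by linear_combination -h2
      have hy : y = 0 := by
        rcases mul_eq_zero.mp hy0 with h | h
        · exact absurd h hl
        · exact h
      exact hv (by simp [hy])
    subst hl
    have hx : x = 0 := by
      have h : x ^ 3 = 0 := by linear_combination h2
      exact pow_eq_zero_iff (n := 3) (by norm_num) |>.mp h
    exact ⟨rfl, by ring, by rw [hx]; ring, by ring⟩
  · have hl : x * (y - z) = lam := by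
      have h : (x * (y - z) - lam) * z = 0 := by linear_combination h3
      rcases mul_eq_zero.mp h with h | h
      · exact sub_eq_zero.mp h
      · exact absurd h hz
    by_cases hyz : y = z
    · subst hyz
      have hl0 : lam = 0 := by rw [← hl]; ring
      subst hl0
      refine ⟨rfl, by ring, by linear_combination h2, by ring⟩
    · have hyz' : y - z ≠ 0 := sub_ne_zero.mpr hyz
      have hk : y * z = x ^ 2 := by
        have h : (y * z - x ^ 2) * (y - z) = 0 := by linear_combination h1 - x * hl
        rcases mul_eq_zero.mp h with h | h
        · exact sub_eq_zero.mp h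
        · exact absurd h hyz'
      have hx : x = 0 := by
        have h : x * (y - z) ^ 2 = 0 := by linear_combination -h2 + y * hl - x * hk
        rcases mul_eq_zero.mp h with h | h
        · exact h
        · exact absurd (pow_eq_zero_iff (n := 2) (by norm_num) |>.mp h) hyz'
      subst hx
      have hl0 : lam = 0 := by rw [← hl]; ring
      have hyz0 : y * z = 0 := by rw [hk]; ring
      exact ⟨hl0, by rw [hyz0]; ring, by ring, by ring⟩
end
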